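/- For every integer n ≥ 1, M_n = U_n ∪ ⋃_{j ≥ n} ((β̄_j − n) + M_0), where U_n = {λ ∈ M_n : λ = Σ_{j=0}^{n−1} l_j β̄_j for some integers l_0, …, l_{n−1} ∈ ℤ} and (β̄_j − n) + M_0 = {β̄_j − n + μ : μ ∈ M_0}. -/

import Mathlib

/-!
Multiplying by `x^n` identifies `W_n` with `x^{-n}(x,y)^n`, because `(x,y) = x·(1, y/x)` and
`W_n = (1, y/x)^n` as `K[x,y]`-modules; hence `M_n = {ν̄(F) - n : 0 ≠ F ∈ (x,y)^n}`.
Write `ν̄(F) = Σ lᵢ β̄ᵢ ∈ M_0`. If only indices `i < n` occur, then `ν̄(F) - n` is a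
`ℤ`-combination of `β̄_0, …, β̄_{n-1}` since `β̄_0 = 1`; otherwise some `β̄_j` with `j ≥ n` can be
split off, giving `ν̄(F) - n ∈ (β̄_j - n) + M_0`. Conversely `P_j ∈ (x,y)^j ⊆ (x,y)^n` for `j ≥ n`,
so `P_j·G/x^n ∈ W_n` realises `β̄_j - n + ν̄(G)`.
-/

open MvPolynomial

/-- `β̄_0 = 1`, `β̄_{i+1} = 2β̄_i + 1/2^{i+1}`, so `β̄_i = (2^{i+2} - 2^{-i})/3`. -/
noncomputable def betaSeq : ℕ → ℚ
  | 0 => 1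
  | (i + 1) => 2 * betaSeq i + 1 / 2 ^ (i + 1)

/-- The generating sequence `P_0 = x`, `P_1 = y`, `P_{i+1} = P_i² - x^{2^{i+1}}·P_{i-1}`. -/
noncomputable def Ppoly (K : Type) [Field K] : ℕ → MvPolynomial (Fin 2) K
  | 0 => X 0
  | 1 => X 1
  | (i + 2) => (Ppoly K (i + 1)) ^ 2 - (X 0) ^ (2 ^ (i + 2)) * Ppoly K i

/-- The rational function field `K(x,y)`. -/
abbrev Kxy (K : Type) [Field K] := FractionRing (MvPolynomial (Fin 2) K)

/-- `W_n = {a_0 + a_1·(y/x) + ⋯ + a_n·(y/x)^n ∣ a_0, …, a_n ∈ K[x,y]} ⊆ K(x,y)`. -/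
noncomputable def Wset (K : Type) [Field K] (n : ℕ) : Set (Kxy K) :=
  {g | ∃ a : Fin (n + 1) → MvPolynomial (Fin 2) K,
    g = ∑ j : Fin (n + 1), algebraMap (MvPolynomial (Fin 2) K) (Kxy K) (a j) *
      (algebraMap (MvPolynomial (Fin 2) K) (Kxy K) (X 1) /
        algebraMap (MvPolynomial (Fin 2) K) (Kxy K) (X 0)) ^ (j : ℕ)}

/-- `M_n = {ν̄(f) ∣ f ∈ W_n, f ≠ 0}` for a valuation `v` on `K(x,y)`. -/
def Mset (K : Type) [Field K] (v : Kxy K → ℚ) (n : ℕ) : Set ℚ :=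
  {q | ∃ g ∈ Wset K n, g ≠ 0 ∧ v g = q}

open Pointwise

theorem Set.range_pow_mul_pair {M : Type*} [Monoid M] (t : M) (n : ℕ) :
    (Set.range fun j : Fin (n + 1) => t ^ (j : ℕ)) * {1, t} =
      Set.range fun j : Fin (n + 2) => t ^ (j : ℕ) := by
  ext z
  simp only [Set.mem_mul, Set.mem_range, Set.mem_insert_iff, Set.mem_singleton_iff]
  constructor
  · rintro ⟨_, ⟨j, rfl⟩, _, rfl | rfl, rfl⟩
    · exact ⟨j.castSucc, by simp⟩
    · exact ⟨j.succ, by simp [pow_succ]⟩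
  · rintro ⟨k, rfl⟩
    induction k using Fin.lastCases with
    | last => exact ⟨_, ⟨Fin.last n, rfl⟩, t, Or.inr rfl, by simp [pow_succ]⟩
    | cast k => exact ⟨_, ⟨k, rfl⟩, 1, Or.inl rfl, by simp⟩

namespace Submodule

variable {R A : Type*} [CommSemiring R] [Semiring A] [Algebra R A]

theorem span_one_pair_pow (t : A) (n : ℕ) :
    span R {1, t} ^ n = span R (Set.range fun j : Fin (n + 1) => t ^ (j : ℕ)) := by
  induction n with
  | zero => simp [Submodule.one_eq_span]
  | succ n ih => rw [pow_succ, ih, span_mul_span, Set.range_pow_mul_pair]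

end Submodule

section FractionField

variable {R L : Type*} [CommRing R] [Field L] [Algebra R L]

theorem map_span_pair_pow_eq (a b : R) (ha : algebraMap R L a ≠ 0) (n : ℕ) :
    Submodule.map (Algebra.ofId R L).toLinearMap (Ideal.span {a, b} ^ n) =
      Submodule.span R {algebraMap R L a ^ n} *
        Submodule.span R {1, algebraMap R L b / algebraMap R L a} ^ n := by
  have hpair : Submodule.map (Algebra.ofId R L).toLinearMap (Ideal.span {a, b}) =
      Submodule.span R {algebraMap R L a} *
        Submodule.span R {1, algebraMap R L b / algebraMap R L a} := by
    rw [Ideal.span, Submodule.map_span, Submodule.span_mul_span]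
    congr 1
    simp [Set.image_insert_eq, Set.singleton_mul, mul_div_cancel₀ _ ha]
  rw [Submodule.map_pow, hpair, mul_pow, Submodule.span_pow, Set.singleton_pow]

theorem mem_span_pair_pow_iff (a b : R) (ha : algebraMap R L a ≠ 0) (n : ℕ) (g : L) :
    g ∈ Submodule.span R {1, algebraMap R L b / algebraMap R L a} ^ n ↔
      ∃ F ∈ Ideal.span {a, b} ^ n, algebraMap R L F = algebraMap R L a ^ n * g := by
  have hcancel : g ∈ Submodule.span R {1, algebraMap R L b / algebraMap R L a} ^ n ↔
      algebraMap R L a ^ n * g ∈ Submodule.span R {algebraMap R L a ^ n} *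
        Submodule.span R {1, algebraMap R L b / algebraMap R L a} ^ n := by
    simp [Submodule.mem_span_singleton_mul, pow_ne_zero n ha]
  rw [hcancel, ← map_span_pair_pow_eq a b ha, Submodule.mem_map]
  rfl

end FractionField

theorem Ppoly_mem_span_pow {K : Type} [Field K] :
    ∀ i : ℕ, Ppoly K i ∈ Ideal.span {X 0, X 1} ^ i
  | 0 => by simp
  | 1 => by simpa [Ppoly] using Ideal.subset_span (by simp)
  | i + 2 => by
    have hx : (X 0 : MvPolynomial (Fin 2) K) ∈ Ideal.span {X 0, X 1} :=
      Ideal.subset_span (by simp)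
    have h2 : 2 ≤ 2 ^ (i + 2) := Nat.le_self_pow (by omega) 2
    rw [Ppoly]
    refine Ideal.sub_mem _ ?_ ?_
    · refine Ideal.pow_le_pow_right (show i + 2 ≤ (i + 1) + (i + 1) by omega) ?_
      rw [sq, pow_add]
      exact Ideal.mul_mem_mul (Ppoly_mem_span_pow (i + 1)) (Ppoly_mem_span_pow (i + 1))
    · refine Ideal.pow_le_pow_right (show i + 2 ≤ 2 ^ (i + 2) + i by omega) ?_
      rw [pow_add]
      exact Ideal.mul_mem_mul (Ideal.pow_mem_pow hx _) (Ppoly_mem_span_pow i)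

theorem aeval_Ppoly_succ {K : Type} [Field K] :
    ∀ i : ℕ,
      aeval ![0, Polynomial.X] (Ppoly K (i + 1)) = (Polynomial.X : Polynomial K) ^ 2 ^ i
  | 0 => by simp [Ppoly]
  | i + 1 => by
    rw [Ppoly, map_sub, map_mul, map_pow, map_pow, aeval_Ppoly_succ i]
    simp [pow_succ, pow_mul]

theorem Ppoly_ne_zero {K : Type} [Field K] : ∀ i : ℕ, Ppoly K i ≠ 0
  | 0 => X_ne_zero 0
  | i + 1 => fun h => by
    simpa [h, eq_comm (a := (0 : Polynomial K))] using aeval_Ppoly_succ (K := K) i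

theorem val_pow {L : Type*} [GroupWithZero L] (v : L → ℚ)
    (hmul : ∀ g h : L, g ≠ 0 → h ≠ 0 → v (g * h) = v g + v h) {a : L} (ha : a ≠ 0) :
    ∀ n : ℕ, v (a ^ n) = n * v a
  | 0 => by simpa using hmul 1 1 one_ne_zero one_ne_zero
  | n + 1 => by
    rw [pow_succ, hmul _ _ (pow_ne_zero n ha) ha, val_pow v hmul ha n]
    push_cast; ring

theorem finsupp_sum_eq_fin_sum_or (β : ℕ → ℚ) (l : ℕ →₀ ℕ) (n : ℕ) :
    (∃ c : Fin n → ℤ, (l.sum fun i k => (k : ℚ) * β i) = ∑ j : Fin n, (c j : ℚ) * β j) ∨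
      ∃ j, n ≤ j ∧ ∃ l' : ℕ →₀ ℕ,
        (l.sum fun i k => (k : ℚ) * β i) = β j + l'.sum fun i k => (k : ℚ) * β i := by
  by_cases hsupp : ∀ i ∈ l.support, i < n
  · left
    refine ⟨fun j => l j, ?_⟩
    rw [Finsupp.sum_of_support_subset l (fun i hi => Finset.mem_range.2 (hsupp i hi)) _
      (fun i _ => by simp), ← Fin.sum_univ_eq_sum_range]
    simp
  · right
    push Not at hsupp
    obtain ⟨j, hj, hnj⟩ := hsupp
    have hle : Finsupp.single j 1 ≤ l :=
      Finsupp.single_le_iff.2 (Nat.one_le_iff_ne_zero.2 (Finsupp.mem_support_iff.1 hj))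
    refine ⟨j, hnj, l - Finsupp.single j 1, ?_⟩
    conv_lhs => rw [← add_tsub_cancel_of_le hle]
    rw [Finsupp.sum_add_index' (fun _ => by simp) (fun _ _ _ => by push_cast; ring),
      Finsupp.sum_single_index (by simp)]
    simp

theorem sub_natCast_eq_fin_sum_or {β : ℕ → ℚ} (hβ0 : β 0 = 1) {n : ℕ} (hn : 1 ≤ n) {q : ℚ}
    (l : ℕ →₀ ℕ) (hl : q + n = l.sum fun i k => (k : ℚ) * β i) :
    (∃ c : Fin n → ℤ, q = ∑ j : Fin n, (c j : ℚ) * β j) ∨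
      ∃ j, n ≤ j ∧ ∃ l' : ℕ →₀ ℕ, q = β j - n + l'.sum fun i k => (k : ℚ) * β i := by
  rcases finsupp_sum_eq_fin_sum_or β l n with ⟨c, hc⟩ | ⟨j, hj, l', hl'⟩
  · obtain ⟨m, rfl⟩ : ∃ m, n = m + 1 := ⟨n - 1, by omega⟩
    refine Or.inl ⟨Fin.cons (c 0 - (m + 1)) (Fin.tail c), ?_⟩
    simp only [Fin.sum_univ_succ, Fin.cons_zero, Fin.cons_succ, Fin.tail] at hc ⊢
    push_cast at hl ⊢
    rw [Fin.val_zero, hβ0] at hc ⊢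
    linarith
  · exact Or.inr ⟨j, hj, l', by linarith⟩

section Valuation

variable {K : Type} [Field K]

local notation "ι" => algebraMap (MvPolynomial (Fin 2) K) (Kxy K)

theorem algebraMap_X_zero_ne_zero : ι (X 0) ≠ 0 :=
  mt IsFractionRing.to_map_eq_zero_iff.1 (X_ne_zero 0)

theorem Wset_eq_span_pow (n : ℕ) :
    Wset K n = ↑(Submodule.span (MvPolynomial (Fin 2) K) {1, ι (X 1) / ι (X 0)} ^ n) := by
  ext g
  rw [SetLike.mem_coe, Submodule.span_one_pair_pow, Submodule.mem_span_range_iff_exists_fun]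
  simp [Wset, Algebra.smul_def, eq_comm]

theorem mem_Wset_iff (n : ℕ) (g : Kxy K) :
    g ∈ Wset K n ↔ ∃ F ∈ Ideal.span {X 0, X 1} ^ n, ι F = ι (X 0) ^ n * g := by
  rw [Wset_eq_span_pow, SetLike.mem_coe]
  exact mem_span_pair_pow_iff _ _ algebraMap_X_zero_ne_zero n g

theorem mem_Mset_iff (v : Kxy K → ℚ)
    (hmul : ∀ g h : Kxy K, g ≠ 0 → h ≠ 0 → v (g * h) = v g + v h) (hx : v (ι (X 0)) = 1)
    (n : ℕ) (q : ℚ) :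
    q ∈ Mset K v n ↔ ∃ F ∈ Ideal.span {X 0, X 1} ^ n, F ≠ 0 ∧ v (ι F) = q + n := by
  have hxn : ι (X 0) ^ n ≠ 0 := pow_ne_zero n algebraMap_X_zero_ne_zero
  have hvxn : v (ι (X 0) ^ n) = n := by
    rw [val_pow v hmul algebraMap_X_zero_ne_zero, hx, mul_one]
  constructor
  · rintro ⟨g, hg, hg0, rfl⟩
    obtain ⟨F, hF, hFg⟩ := (mem_Wset_iff n g).1 hg
    refine ⟨F, hF, ?_, ?_⟩
    · rintro rfl
      simp [hxn, hg0] at hFg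
    · rw [hFg, hmul _ _ hxn hg0, hvxn, add_comm]
  · rintro ⟨F, hF, hF0, hvF⟩
    have hιF : ι F ≠ 0 := mt IsFractionRing.to_map_eq_zero_iff.1 hF0
    have hg0 : ι F / ι (X 0) ^ n ≠ 0 := div_ne_zero hιF hxn
    refine ⟨ι F / ι (X 0) ^ n,
      (mem_Wset_iff n _).2 ⟨F, hF, (mul_div_cancel₀ _ hxn).symm⟩, hg0, ?_⟩
    have := hmul _ _ hxn hg0
    rw [mul_div_cancel₀ _ hxn, hvxn] at this
    linarith

end Valuation

theorem Mn_decomposition_general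
    (K : Type) [Field K]
    (v : Kxy K → ℚ)
    (hmul : ∀ g h : Kxy K, g ≠ 0 → h ≠ 0 → v (g * h) = v g + v h)
    (hβ : ∀ i : ℕ, v (algebraMap (MvPolynomial (Fin 2) K) (Kxy K) (Ppoly K i)) = betaSeq i)
    (hM0 : Mset K v 0 = {q : ℚ | ∃ l : ℕ →₀ ℕ, q = l.sum fun i k => (k : ℚ) * betaSeq i}) :
    ∀ n : ℕ, 1 ≤ n →
      Mset K v n =
        {q ∈ Mset K v n | ∃ l : Fin n → ℤ, q = ∑ j : Fin n, (l j : ℚ) * betaSeq (j : ℕ)} ∪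
          ⋃ j : ℕ, ⋃ (_ : n ≤ j), (fun μ => betaSeq j - (n : ℚ) + μ) '' Mset K v 0 := by
  intro n hn
  have hx : v (algebraMap (MvPolynomial (Fin 2) K) (Kxy K) (X 0)) = 1 := hβ 0
  have mem_M0 (μ : ℚ) :
      μ ∈ Mset K v 0 ↔ ∃ G ≠ 0, v (algebraMap (MvPolynomial (Fin 2) K) (Kxy K) G) = μ := by
    simp [mem_Mset_iff v hmul hx 0]
  ext q
  simp only [Set.mem_union, Set.mem_ofPred_eq, Set.mem_iUnion, Set.mem_image]
  constructor
  · intro hq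
    obtain ⟨F, -, hF0, hvF⟩ := (mem_Mset_iff v hmul hx n q).1 hq
    obtain ⟨l, hl⟩ : q + n ∈ {q : ℚ | ∃ l : ℕ →₀ ℕ, q = l.sum fun i k => (k : ℚ) * betaSeq i} :=
      hM0 ▸ (mem_M0 _).2 ⟨F, hF0, hvF⟩
    rcases sub_natCast_eq_fin_sum_or rfl hn l hl with ⟨c, hc⟩ | ⟨j, hj, l', hl'⟩
    · exact Or.inl ⟨hq, c, hc⟩
    · exact Or.inr ⟨j, hj, _, hM0 ▸ ⟨l', rfl⟩, hl'.symm⟩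
  · rintro (⟨hq, -⟩ | ⟨j, hj, μ, hμ, rfl⟩)
    · exact hq
    · obtain ⟨G, hG0, hvG⟩ := (mem_M0 μ).1 hμ
      refine (mem_Mset_iff v hmul hx n _).2
        ⟨Ppoly K j * G, ?_, mul_ne_zero (Ppoly_ne_zero j) hG0, ?_⟩
      · exact Ideal.mul_mem_right _ _ (Ideal.pow_le_pow_right hj (Ppoly_mem_span_pow j))
      · rw [map_mul, hmul _ _ (mt IsFractionRing.to_map_eq_zero_iff.1 (Ppoly_ne_zero j))
          (mt IsFractionRing.to_map_eq_zero_iff.1 hG0), hβ, hvG]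
        ring

/-- For every `n ≥ 1`, `M_n = U_n ∪ ⋃_{j ≥ n} ((β̄_j - n) + M_0)`, where `U_n` consists of
the elements of `M_n` which are `ℤ`-linear combinations of `β̄_0, …, β̄_{n-1}`. -/
theorem Mn_decomposition
    (K : Type) [Field K] [IsAlgClosed K]
    (v : Kxy K → ℚ)
    (hmul : ∀ g h : Kxy K, g ≠ 0 → h ≠ 0 → v (g * h) = v g + v h)
    (hadd : ∀ g h : Kxy K, g ≠ 0 → h ≠ 0 → g + h ≠ 0 → min (v g) (v h) ≤ v (g + h))
    (hnonneg : ∀ f : MvPolynomial (Fin 2) K, f ≠ 0 →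
      0 ≤ v (algebraMap (MvPolynomial (Fin 2) K) (Kxy K) f))
    (hpos : ∀ f : MvPolynomial (Fin 2) K, f ≠ 0 → f ∈ Ideal.span {X 0, X 1} →
      0 < v (algebraMap (MvPolynomial (Fin 2) K) (Kxy K) f))
    (hβ : ∀ i : ℕ, v (algebraMap (MvPolynomial (Fin 2) K) (Kxy K) (Ppoly K i)) = betaSeq i)
    (hM0 : Mset K v 0 = {q : ℚ | ∃ l : ℕ →₀ ℕ, q = l.sum fun i k => (k : ℚ) * betaSeq i}) :
    ∀ n : ℕ, 1 ≤ n →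
      Mset K v n =
        {q ∈ Mset K v n | ∃ l : Fin n → ℤ, q = ∑ j : Fin n, (l j : ℚ) * betaSeq (j : ℕ)} ∪
          ⋃ j : ℕ, ⋃ (_ : n ≤ j), (fun μ => betaSeq j - (n : ℚ) + μ) '' Mset K v 0 :=
  Mn_decomposition_general K v hmul hβ hM0
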